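/- With the setup of the perpendicular-circles construction (p_j for 0 ≤ j ≤ m−1 on the unit circle in the xy-plane and q_k for 0 ≤ k ≤ n−1 on the circle in the xz-plane, with squared distance |p_j q_k|² = 2b²β^(j+k) + 1 + r² − a² and 0 < β < 1), the number of distinct distances spanned by pairs (p_j, q_k) is exactly m + n − 1. -/

import Mathlib

open scoped Classical

noncomputable def pt (x y z : ℝ) : EuclideanSpace ℝ (Fin 3) := !₂[x, y, z]

/-- The point `p_j` on the unit circle in the `xy`-plane. -/
noncomputable def pPt (a b β : ℝ) (j : ℕ) : EuclideanSpace ℝ (Fin 3) :=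
  pt (b * β ^ j - a) (Real.sqrt (1 - (b * β ^ j - a) ^ 2)) 0

/-- The point `q_k` on the circle of radius `r` centered at `(−a,0,0)` in the `xz`-plane. -/
noncomputable def qPt (a r b β : ℝ) (k : ℕ) : EuclideanSpace ℝ (Fin 3) :=
  pt (-(b * β ^ k)) 0 (r * Real.sqrt (1 - ((a - b * β ^ k) / r) ^ 2))

/-!
Both points depend on their index only through `b β^j`, and expanding the coordinates gives
`|p_j q_k|² = 2 b² β^(j+k) + 1 + r² - a²`, a strictly decreasing function of `j + k`. So the
distances are in bijection with the values of `j + k`, which fill `{0, …, m + n - 2}`.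
Counting squared distances instead of distances avoids checking that the right-hand side is
positive: it is a square.
-/

open Finset Function

lemma image_add_range_product {m n : ℕ} (hm : 0 < m) (hn : 0 < n) :
    (range m ×ˢ range n).image (fun jk : ℕ × ℕ => jk.1 + jk.2) = range (m + n - 1) := by
  ext s
  simp only [mem_image, mem_product, mem_range]
  constructor
  · rintro ⟨⟨j, k⟩, ⟨hj, hk⟩, rfl⟩
    omega
  · intro hs
    exact ⟨(min s (m - 1), s - min s (m - 1)), ⟨by omega, by omega⟩, by omega⟩

lemma card_image_comp_add_range_product {α : Type*} [DecidableEq α] {f : ℕ → α}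
    (hf : Injective f) {m n : ℕ} (hm : 0 < m) (hn : 0 < n) :
    ((range m ×ˢ range n).image (fun jk : ℕ × ℕ => f (jk.1 + jk.2))).card = m + n - 1 := by
  rw [show (fun jk : ℕ × ℕ => f (jk.1 + jk.2)) = f ∘ fun jk => jk.1 + jk.2 from rfl,
    ← image_image, image_add_range_product hm hn,
    card_image_of_injective _ hf, card_range]

lemma card_image_sq_of_nonneg {ι : Type*} (s : Finset ι) {g : ι → ℝ} (hg : ∀ i ∈ s, 0 ≤ g i) :
    (s.image fun i => g i ^ 2).card = (s.image g).card := by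
  rw [show (fun i => g i ^ 2) = (· ^ 2) ∘ g from rfl, ← image_image]
  refine card_image_of_injOn fun x hx y hy hxy => ?_
  obtain ⟨i, hi, rfl⟩ := mem_image.mp hx
  obtain ⟨i', hi', rfl⟩ := mem_image.mp hy
  exact (sq_eq_sq₀ (hg i hi) (hg i' hi')).mp hxy

lemma dist_pPt_qPt_sq {a r b β : ℝ} {j k : ℕ} (hr : 0 < r)
    (hj : |b * β ^ j - a| ≤ 1) (hk : |a - b * β ^ k| ≤ r) :
    dist (pPt a b β j) (qPt a r b β k) ^ 2 = 2 * b ^ 2 * β ^ (j + k) + (1 + r ^ 2 - a ^ 2) := by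
  have hp : 0 ≤ 1 - (b * β ^ j - a) ^ 2 :=
    sub_nonneg.mpr ((sq_le_one_iff_abs_le_one _).mpr hj)
  have hq : 0 ≤ 1 - ((a - b * β ^ k) / r) ^ 2 := by
    refine sub_nonneg.mpr ((sq_le_one_iff_abs_le_one _).mpr ?_)
    rwa [abs_div, abs_of_pos hr, div_le_one hr]
  rw [EuclideanSpace.dist_eq, Real.sq_sqrt (by positivity)]
  simp only [pPt, qPt, pt, PiLp.toLp_apply, Matrix.cons_val_zero, Matrix.cons_val_one,
    Matrix.cons_val_two, Matrix.head_cons, Matrix.tail_cons, Fin.sum_univ_three, Real.dist_eq,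
    sq_abs, sub_zero, zero_sub, neg_sq, mul_pow, Real.sq_sqrt hp, Real.sq_sqrt hq]
  field_simp
  ring

lemma mul_pow_mem_Ioc {a b β : ℝ} {n j : ℕ} (ha : 0 < a) (hab : a < b)
    (hβ : β ∈ Set.Ioo ((a / b) ^ ((1 : ℝ) / n)) 1) (hn : 0 < n) (hj : j ≤ n) :
    b * β ^ j ∈ Set.Ioc a b := by
  obtain ⟨hβl, hβ1⟩ := hβ
  have hb : 0 < b := ha.trans hab
  have hβ0 : 0 < β := (Real.rpow_nonneg (by positivity) _).trans_lt hβl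
  have hβn : a / b < β ^ n := by
    rw [one_div, Real.rpow_inv_lt_iff_of_pos (by positivity) hβ0.le (by positivity),
      Real.rpow_natCast] at hβl
    exact hβl
  constructor
  · calc a = b * (a / b) := by field_simp
      _ < b * β ^ n := by gcongr
      _ ≤ b * β ^ j := by gcongr b * ?_; exact pow_le_pow_of_le_one hβ0.le hβ1.le hj
  · exact mul_le_of_le_one_right hb.le (pow_le_one₀ hβ0.le hβ1.le)

/-- In the perpendicular-circles construction, the number of distinct distances
spanned by the pairs `(p_j, q_k)` for `0 ≤ j ≤ m−1`, `0 ≤ k ≤ n−1` is exactly `m + n − 1`. -/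
theorem perpendicular_circles_distinct_distances (a r b β : ℝ) (m n : ℕ)
    (ha : 0 < a) (hr : 0 < r) (hmn : m ≤ n) (hm : 1 ≤ m)
    (hb : b ∈ Set.Ioo a (a + min 1 r))
    (hβ : β ∈ Set.Ioo ((a / b) ^ ((1 : ℝ) / n)) 1) :
    (((Finset.range m) ×ˢ (Finset.range n)).image
        (fun jk => dist (pPt a b β jk.1) (qPt a r b β jk.2))).card = m + n - 1 := by
  obtain ⟨hab, hbu⟩ := hb
  have hn : 0 < n := by omega
  have hb0 : 0 < b := ha.trans hab
  have hβ0 : 0 < β := (Real.rpow_nonneg (div_pos ha hb0).le _).trans_lt hβ.1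
  have hclose : ∀ j < n, |b * β ^ j - a| < min 1 r := fun j hj => by
    obtain ⟨hl, hu⟩ := mul_pow_mem_Ioc ha hab hβ hn hj.le
    rw [abs_of_pos (sub_pos.mpr hl)]
    linarith
  have hdist_sq : ∀ jk ∈ range m ×ˢ range n, dist (pPt a b β jk.1) (qPt a r b β jk.2) ^ 2 =
      2 * b ^ 2 * β ^ (jk.1 + jk.2) + (1 + r ^ 2 - a ^ 2) := fun ⟨j, k⟩ hjk => by
    simp only [mem_product, mem_range] at hjk
    exact dist_pPt_qPt_sq hr ((hclose j (by omega)).le.trans (min_le_left _ _))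
      (abs_sub_comm a _ ▸ (hclose k hjk.2).le.trans (min_le_right _ _))
  have hinj : Injective fun s : ℕ => 2 * b ^ 2 * β ^ s + (1 + r ^ 2 - a ^ 2) :=
    fun s t hst => (pow_right_strictAnti₀ hβ0 hβ.2).injective
      (mul_left_cancel₀ (by positivity) (add_right_cancel hst))
  rw [← card_image_sq_of_nonneg _ fun _ _ => dist_nonneg, image_congr hdist_sq]
  exact card_image_comp_add_range_product hinj hm hn
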